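/- Let G be a connected simple graph on N vertices with adjacency matrix A, let d = A𝟙 be the degree vector, Δ = max_i d_i the maximum degree, and set M = A − diag(d) + Δ·I. If M has exactly s distinct eigenvalues, then there exist s − 1 real matrices A^(1), …, A^(s−1), each in M(G), whose product equals (1/N)·𝟙𝟙ᵀ; that is, average consensus on G is linearly achievable in s − 1 steps using this matrix. -/

import Mathlib

/-!
Write `L` for the Laplacian of `G`, so that `M = Δ • 1 - L` and the spectrum of `M` is `Δ - σ(L)`.
The `s - 1` factors are `1 - λ⁻¹ • L = λ⁻¹ • (M - (Δ - λ) • 1)` for the nonzero eigenvalues `λ`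
of `L`. Their product is `p(L)` for a polynomial `p` with `p(0) = 1` vanishing on the nonzero
spectrum, so `L * p(L) = 0`: every column of `p(L)` lies in `ker L`, which consists of the
constant vectors because `G` is connected. As `p(L)` is also symmetric it is a constant matrix,
and `p(L) 𝟙 = p(0) 𝟙 = 𝟙` identifies the constant as `1 / N`.
-/

open Matrix

/-- A real `N × N` matrix complies with the graph `G` when its off-diagonal
entries vanish outside the edges of `G`. -/
def SimpleGraph.Complies {N : ℕ} (G : SimpleGraph (Fin N))
    (A : Matrix (Fin N) (Fin N) ℝ) : Prop :=
  ∀ i j : Fin N, i ≠ j → ¬ G.Adj i j → A i j = 0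

open Polynomial

namespace Matrix

variable {n R : Type*} [Fintype n] [DecidableEq n]

theorem aeval_mulVec_of_mulVec_eq_smul [CommRing R] {M : Matrix n n R} {v : n → R} {μ : R}
    (h : M *ᵥ v = μ • v) (p : R[X]) : aeval M p *ᵥ v = p.eval μ • v := by
  rcases eq_or_ne v 0 with rfl | hv
  · simp
  have hvec : Module.End.HasEigenvector (toLin' M) μ v := ⟨Module.End.mem_eigenspace_iff.2 h, hv⟩
  rw [← toLinAlgEquiv'_apply, ← aeval_algHom_apply]
  exact Module.End.aeval_apply_of_hasEigenvector hvec

theorem mem_spectrum_iff_exists_mulVec_eq_smul [Field R] {M : Matrix n n R} {μ : R} :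
    μ ∈ spectrum R M ↔ ∃ v ≠ 0, M *ᵥ v = μ • v := by
  rw [← spectrum_toLin', ← Module.End.hasEigenvalue_iff_mem_spectrum]
  simp [Module.End.hasEigenvalue_iff, Submodule.ne_bot_iff, and_comm]

variable {𝕜 : Type*} [RCLike 𝕜] {A : Matrix n n 𝕜}

theorem IsHermitian.aeval_eq_zero (hA : A.IsHermitian) {p : ℝ[X]}
    (hp : ∀ μ ∈ spectrum ℝ A, p.eval μ = 0) : Polynomial.aeval A p = 0 := by
  rw [← cfc_polynomial p A hA.isSelfAdjoint, cfc_congr (g := 0) hp, cfc_zero]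

theorem IsHermitian.aeval (hA : A.IsHermitian) (p : ℝ[X]) :
    (Polynomial.aeval A p).IsHermitian := by
  rw [← cfc_polynomial p A hA.isSelfAdjoint]
  exact cfc_predicate _ _

end Matrix

theorem Polynomial.prod_reverse_ofFn_aeval {R A : Type*} [CommSemiring R] [Semiring A]
    [Algebra R A] {k : ℕ} (a : A) (f : Fin k → R[X]) :
    (List.ofFn fun t => aeval a (f t)).reverse.prod = aeval a (∏ t, f t) := by
  change (List.ofFn (aeval a ∘ f)).reverse.prod = _
  rw [← List.map_ofFn, ← List.map_reverse, ← map_list_prod, List.prod_reverse, List.prod_ofFn]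

namespace SimpleGraph

variable {V R : Type*} [Fintype V] [DecidableEq V] (G : SimpleGraph V) [DecidableRel G.Adj]

theorem adjMatrix_sub_diagonal_mulVec_one [NonAssocRing R] :
    G.adjMatrix R - diagonal (G.adjMatrix R *ᵥ fun _ => 1) = -G.lapMatrix R := by
  have hdeg : (G.adjMatrix R *ᵥ fun _ => 1) = fun i => (G.degree i : R) := by
    ext i
    simp [adjMatrix_mulVec_apply]
  rw [hdeg, lapMatrix, degMatrix, neg_sub]

theorem zero_mem_spectrum_lapMatrix [Nonempty V] : (0 : ℝ) ∈ spectrum ℝ (G.lapMatrix ℝ) := by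
  rw [spectrum.zero_mem_iff, isUnit_iff_isUnit_det, det_lapMatrix_eq_zero]
  exact not_isUnit_zero

variable {G}

theorem Connected.apply_eq_of_lapMatrix_mul_eq_zero (hG : G.Connected) {Q : Matrix V V ℝ}
    (hQ : Q.IsHermitian) (h : G.lapMatrix ℝ * Q = 0) (i j k l : V) : Q i j = Q k l := by
  have hcol (j i k : V) : Q i j = Q k j := by
    have hker : G.lapMatrix ℝ *ᵥ (Q *ᵥ Pi.single j 1) = 0 := by
      rw [mulVec_mulVec, h, zero_mulVec]
    simpa [mulVec_single_one] using
      lapMatrix_mulVec_eq_zero_iff_forall_reachable G |>.1 hker i k (hG.preconnected i k)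
  have hsymm (i j : V) : Q i j = Q j i := by simpa using (hQ.apply i j).symm
  rw [hcol j i k, hsymm k j, hcol k j l, hsymm l k]

theorem Connected.aeval_lapMatrix_eq_inv_card (hG : G.Connected) {p : ℝ[X]}
    (h0 : p.eval 0 = 1) (hp : ∀ μ ∈ spectrum ℝ (G.lapMatrix ℝ), μ ≠ 0 → p.eval μ = 0) :
    aeval (G.lapMatrix ℝ) p = of fun _ _ => (Fintype.card V : ℝ)⁻¹ := by
  set L := G.lapMatrix ℝ
  have hLQ : L * aeval L p = 0 := by
    have := (isHermitian_lapMatrix ℝ G).aeval_eq_zero (p := X * p) fun μ hμ => by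
      rcases eq_or_ne μ 0 with rfl | hμ0
      · simp
      · simp [hp μ hμ hμ0]
    simpa using this
  have hQ1 : aeval L p *ᵥ (fun _ => 1) = fun _ => 1 := by
    have hL1 : L *ᵥ (fun _ => 1) = (0 : ℝ) • fun _ => 1 := by
      simpa using G.lapMatrix_mulVec_const_eq_zero
    simpa [h0] using aeval_mulVec_of_mulVec_eq_smul hL1 p
  have hconst := hG.apply_eq_of_lapMatrix_mul_eq_zero ((isHermitian_lapMatrix ℝ G).aeval p) hLQ
  obtain ⟨i⟩ := hG.nonempty
  have hc : (Fintype.card V : ℝ) * aeval L p i i = 1 := by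
    have hrow := congrFun hQ1 i
    simp only [mulVec, dotProduct, mul_one] at hrow
    rwa [Finset.sum_congr rfl fun k _ => hconst i k i i, Finset.sum_const, Finset.card_univ,
      nsmul_eq_mul] at hrow
  ext j k
  rw [of_apply, hconst j k i i, eq_inv_of_mul_eq_one_right hc]

end SimpleGraph

theorem SimpleGraph.complies_one_sub_smul_lapMatrix {N : ℕ} (G : SimpleGraph (Fin N))
    [DecidableRel G.Adj] (c : ℝ) : G.Complies (1 - c • G.lapMatrix ℝ) := by
  intro i j hij hadj
  simp [lapMatrix, degMatrix, hij, hadj]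

theorem consensus_from_laplacian_shift_general {N : ℕ} (G : SimpleGraph (Fin N))
    [DecidableRel G.Adj] (hG : G.Connected)
    (d : Fin N → ℝ) (hd : d = (G.adjMatrix ℝ).mulVec (fun _ => 1))
    (Δ : ℝ)
    (M : Matrix (Fin N) (Fin N) ℝ)
    (hMdef : M = G.adjMatrix ℝ - Matrix.diagonal d + Δ • (1 : Matrix (Fin N) (Fin N) ℝ))
    (s : ℕ)
    (heig : {μ : ℝ | ∃ v : Fin N → ℝ, v ≠ 0 ∧ M.mulVec v = μ • v}.ncard = s) :
    ∃ A : Fin (s - 1) → Matrix (Fin N) (Fin N) ℝ,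
      (∀ t : Fin (s - 1), G.Complies (A t)) ∧
      (List.ofFn A).reverse.prod = Matrix.of (fun _ _ => (N : ℝ)⁻¹) := by
  set L := G.lapMatrix ℝ
  have : Nonempty (Fin N) := hG.nonempty
  have hML : M = algebraMap ℝ _ Δ - L := by
    rw [hMdef, hd, G.adjMatrix_sub_diagonal_mulVec_one, Algebra.algebraMap_eq_smul_one]
    abel
  have hspec : (spectrum ℝ L \ {0}).ncard = s - 1 := by
    have hset : {μ : ℝ | ∃ v : Fin N → ℝ, v ≠ 0 ∧ M *ᵥ v = μ • v} = spectrum ℝ M :=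
      Set.ext fun _ => mem_spectrum_iff_exists_mulVec_eq_smul.symm
    rw [Set.ncard_sdiff_singleton_of_mem G.zero_mem_spectrum_lapMatrix, ← heig, hset, hML,
      ← spectrum.singleton_sub_eq, Set.singleton_sub,
      Set.ncard_image_of_injective _ sub_right_injective]
  let e := Finite.equivFinOfCardEq hspec
  let eig t := (e.symm t : ℝ)
  refine ⟨fun t => 1 - (eig t)⁻¹ • L, fun t => G.complies_one_sub_smul_lapMatrix _, ?_⟩
  have hfactor t : 1 - (eig t)⁻¹ • L = aeval L (1 - C (eig t)⁻¹ * X) := by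
    simp [Algebra.smul_def]
  rw [funext hfactor, prod_reverse_ofFn_aeval, hG.aeval_lapMatrix_eq_inv_card, Fintype.card_fin]
  · simp [eval_prod]
  · intro μ hμ hμ0
    rw [eval_prod]
    refine Finset.prod_eq_zero (Finset.mem_univ (e ⟨μ, hμ, hμ0⟩)) ?_
    simp [eig, hμ0]

/-- For a connected graph `G` with adjacency matrix `A`, degree vector
`d = A𝟙` and maximum degree `Δ`, if the matrix `M = A - diag(d) + Δ·I` has
exactly `s` distinct eigenvalues, then average consensus on `G` is linearly
achievable in `s - 1` steps with compliant matrices. -/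
theorem consensus_from_laplacian_shift {N : ℕ} (G : SimpleGraph (Fin N))
    [DecidableRel G.Adj] (hG : G.Connected)
    (d : Fin N → ℝ) (hd : d = (G.adjMatrix ℝ).mulVec (fun _ => 1))
    (Δ : ℝ) (hΔ : IsGreatest (Set.range d) Δ)
    (M : Matrix (Fin N) (Fin N) ℝ)
    (hMdef : M = G.adjMatrix ℝ - Matrix.diagonal d + Δ • (1 : Matrix (Fin N) (Fin N) ℝ))
    (s : ℕ)
    (heig : {μ : ℝ | ∃ v : Fin N → ℝ, v ≠ 0 ∧ M.mulVec v = μ • v}.ncard = s) :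
    ∃ A : Fin (s - 1) → Matrix (Fin N) (Fin N) ℝ,
      (∀ t : Fin (s - 1), G.Complies (A t)) ∧
      (List.ofFn A).reverse.prod = Matrix.of (fun _ _ => (N : ℝ)⁻¹) :=
  consensus_from_laplacian_shift_general G hG d hd Δ M hMdef s heig
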